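/- Let R ⊆ A^q be a submodule such that M = A^q/R is finitely generated as a module over A_d (i.e., the behavior B(R) is strongly relevant of order d). Then there exist a positive integer γ and matrices X(σ₁) ∈ A_d^{δ×γ}, A₁(σ₁),…,A_{n−d}(σ₁) ∈ A_d^{γ×γ}, and C(σ₁) ∈ A_d^{q×γ} such that B(R) = { w : ℤⁿ → ℝ^q | there exists x : ℤⁿ → ℝ^γ with X(σ₁)·x = 0, σ_{d+j}·x = A_j(σ₁)·x for every 1 ≤ j ≤ n−d, and w = C(σ₁)·x }. -/

import Mathlib

set_option synthInstance.maxHeartbeats 1000000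
set_option maxHeartbeats 1000000

noncomputable section

/-- The Laurent polynomial ring `A = ℝ[σ₁^{±1},…,σₙ^{±1}]` in `n` indeterminates,
realized as the group algebra of `ℤⁿ` over `ℝ`. -/
abbrev LP (n : ℕ) : Type := AddMonoidAlgebra ℝ (Fin n → ℤ)

/-- The monomial `σ^ν` for `ν ∈ ℤⁿ`. -/
def mono {n : ℕ} (ν : Fin n → ℤ) : LP n := AddMonoidAlgebra.single ν 1

/-- The Laurent polynomial subring `A_d = ℝ[σ₁^{±1},…,σ_d^{±1}]` in the first `d`
indeterminates, as a subalgebra of `A`: it is generated by the monomials `σ^ν`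
with `ν` supported on the first `d` coordinates. -/
def subA (n d : ℕ) : Subalgebra ℝ (LP n) :=
  Algebra.adjoin ℝ {x | ∃ ν : Fin n → ℤ, (∀ i : Fin n, d ≤ (i : ℕ) → ν i = 0) ∧ x = mono ν}

/-- The index of the variable `σ_{d+j}` for `1 ≤ j ≤ n-d` (0-indexed: `j : Fin (n-d)`). -/
def embIdx {n : ℕ} (d : ℕ) (j : Fin (n - d)) : Fin n :=
  ⟨d + (j : ℕ), by have := j.isLt; omega⟩

/-- The variable `σ_{d+j}` as an element of `A`. -/
def sigmaVar {n : ℕ} (d : ℕ) (j : Fin (n - d)) : LP n := mono (Pi.single (embIdx d j) 1)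

/-- The action of a Laurent polynomial `f ∈ A` on a scalar trajectory `w : ℤⁿ → ℝ`:
`(σ^{ν'} w)(ν) = w(ν + ν')`, extended `ℝ`-linearly. -/
def actS {n : ℕ} (f : LP n) (w : (Fin n → ℤ) → ℝ) : (Fin n → ℤ) → ℝ :=
  fun ν => Finsupp.sum f.coeff fun μ c => c * w (ν + μ)

/-- The action of a row vector `r ∈ A^q` on a vector trajectory `w : ℤⁿ → ℝ^q`:
`r·w = Σᵢ rᵢ·wᵢ`. -/
def actRow {n q : ℕ} (r : Fin q → LP n) (w : (Fin n → ℤ) → Fin q → ℝ) : (Fin n → ℤ) → ℝ :=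
  fun ν => ∑ j, actS (r j) (fun μ => w μ j) ν

/-- The componentwise action of a matrix `P ∈ A^{a×b}` on a trajectory `w : ℤⁿ → ℝ^b`. -/
def actMat {n a b : ℕ} (P : Matrix (Fin a) (Fin b) (LP n)) (w : (Fin n → ℤ) → Fin b → ℝ) :
    (Fin n → ℤ) → Fin a → ℝ :=
  fun ν i => actRow (P i) w ν

/-- The behavior of a submodule `R ⊆ A^q`:
`B(R) = {w : ℤⁿ → ℝ^q | r·w = 0 for all r ∈ R}`. -/
def Behavior {n q : ℕ} (R : Submodule (LP n) (Fin q → LP n)) :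
    Set ((Fin n → ℤ) → Fin q → ℝ) :=
  {w | ∀ r ∈ R, actRow r w = 0}

/-- A matrix `T ∈ ℤ^{n×n}` is ℤ-unimodular if `det T = ±1`. -/
def Unimodular {n : ℕ} (T : Matrix (Fin n) (Fin n) ℤ) : Prop := T.det = 1 ∨ T.det = -1

/-- The `ℝ`-algebra endomorphism `φ_T : A → A` induced by `T ∈ ℤ^{n×n}`,
determined by `φ_T(σ^ν) = σ^{Tν}`. -/
def phiT {n : ℕ} (T : Matrix (Fin n) (Fin n) ℤ) : LP n →ₐ[ℝ] LP n :=
  AddMonoidAlgebra.mapDomainAlgHom ℝ ℝ T.mulVecLin.toAddMonoidHom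

/-- The image `φ̂_T(R)` of a submodule `R ⊆ A^q` under the componentwise extension
`φ̂_T : A^q → A^q` of `φ_T` (the span is taken only to record that it is a submodule;
for unimodular `T` the image is already a submodule). -/
def hatPhiT {n q : ℕ} (T : Matrix (Fin n) (Fin n) ℤ) (R : Submodule (LP n) (Fin q → LP n)) :
    Submodule (LP n) (Fin q → LP n) :=
  Submodule.span (LP n) ((fun r (i : Fin q) => phiT T (r i)) '' (R : Set (Fin q → LP n)))

/-- The annihilator ideal `ann(A^q/R) = {f ∈ A | f·v ∈ R for all v ∈ A^q}`. -/
def annQ {n q : ℕ} (R : Submodule (LP n) (Fin q → LP n)) : Ideal (LP n) :=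
  Submodule.colon R ⊤

/-- The monomial `σ₁^{ν₁}⋯σ_d^{ν_d}` (the part of `σ^ν` in the first `d` variables),
as an element of `A_d`. -/
def monoD (n d : ℕ) (ν : Fin n → ℤ) : subA n d :=
  ⟨mono (fun i => if (i : ℕ) < d then ν i else 0),
   Algebra.subset_adjoin
     ⟨fun i => if (i : ℕ) < d then ν i else 0, fun i hi => if_neg (by omega), rfl⟩⟩

/-!
Choose generators `m₁, …, m_γ` of `M` over `A_d` (adjoining `0` makes `γ > 0`), lift them to
`gₖ ∈ A^q`, and let the rows of `X` generate the `A_d`-relations among the `mₖ` (`A_d` is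
Noetherian), `A j` express `σ_{d+j} mₖ`, and `C` express the classes of the unit rows. For
`w ∈ B(R)` the trajectory `xₖ := gₖ·w` is annihilated by every `A`-relation among the `mₖ`.
Conversely, a trajectory `x` with `X x = 0` defines an `A_d`-linear map `M → ℝ^{ℤⁿ}`,
`Σ cₖ mₖ ↦ Σ cₖ·xₖ`; the equations `σ_{d+j} x = A_j x` make it commute with `σ_{d+j}`, hence with
`σ_{d+j}⁻¹`, hence with all of `A`. So again every `A`-relation among the `mₖ` annihilates `x`,
and then `C x ∈ B(R)`.
-/

theorem Fintype.linearCombination_linearMap_comp {R M M' ι : Type*} [Fintype ι] [CommSemiring R]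
    [AddCommMonoid M] [Module R M] [AddCommMonoid M'] [Module R M'] (f : M →ₗ[R] M')
    (v : ι → M) (c : ι → R) :
    Fintype.linearCombination R (f ∘ v) c = f (Fintype.linearCombination R v c) := by
  simp [Fintype.linearCombination_apply]

theorem Fintype.linearCombination_pi_single {R ι : Type*} [Fintype ι] [DecidableEq ι]
    [CommSemiring R] (r : ι → R) :
    Fintype.linearCombination R (fun i => (Pi.single i 1 : ι → R)) r = r := by
  simp_rw [Fintype.linearCombination_apply, ← Pi.single_smul', smul_eq_mul, mul_one]
  exact Finset.univ_sum_single r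

theorem Module.Finite.exists_fin_pos_surjective_linearCombination (R M : Type*) [CommRing R]
    [AddCommGroup M] [Module R M] [Module.Finite R M] :
    ∃ γ : ℕ, 0 < γ ∧ ∃ m : Fin γ → M, Function.Surjective (Fintype.linearCombination R m) := by
  obtain ⟨k, m₀, hm₀⟩ := Module.Finite.exists_fin (R := R) (M := M)
  refine ⟨k + 1, k.succ_pos, Fin.cons 0 m₀,
    (span_range_eq_top_iff_surjective_fintypeLinearCombination R _).1 ?_⟩
  rw [Fin.range_cons, Submodule.span_insert_zero, hm₀]

def shiftAction (n : ℕ) : LP n →ₐ[ℝ] Module.End ℝ ((Fin n → ℤ) → ℝ) :=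
  AddMonoidAlgebra.lift ℝ _ (Fin n → ℤ)
    { toFun := fun μ => LinearMap.funLeft ℝ ℝ (· + Multiplicative.toAdd μ)
      map_one' := by ext; simp
      map_mul' := fun _ _ => by ext; simp [add_assoc] }

section Action

variable {n q : ℕ}

theorem actS_eq_shiftAction (f : LP n) (w : (Fin n → ℤ) → ℝ) : actS f w = shiftAction n f w := by
  funext ν
  simp [actS, shiftAction, AddMonoidAlgebra.lift_apply, Finsupp.sum, smul_eq_mul]

theorem actS_mono (μ : Fin n → ℤ) (w : (Fin n → ℤ) → ℝ) :
    actS (mono μ) w = fun ν => w (ν + μ) := by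
  simp only [mono, actS_eq_shiftAction, shiftAction, AddMonoidAlgebra.lift_single,
    MonoidHom.coe_mk, OneHom.coe_mk, toAdd_ofAdd, one_smul]
  rfl

theorem actS_one (w : (Fin n → ℤ) → ℝ) : actS 1 w = w := by
  rw [actS_eq_shiftAction, map_one, Module.End.one_apply]

theorem actS_mul (f g : LP n) (w : (Fin n → ℤ) → ℝ) : actS (f * g) w = actS f (actS g w) := by
  simp only [actS_eq_shiftAction, map_mul, Module.End.mul_apply]

theorem actS_comm (f g : LP n) (w : (Fin n → ℤ) → ℝ) : actS f (actS g w) = actS g (actS f w) := by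
  rw [← actS_mul, mul_comm, actS_mul]

theorem actS_add (f g : LP n) (w : (Fin n → ℤ) → ℝ) : actS (f + g) w = actS f w + actS g w := by
  simp only [actS_eq_shiftAction, map_add, LinearMap.add_apply]

theorem actS_zero_right (f : LP n) : actS f 0 = 0 := by
  rw [actS_eq_shiftAction, map_zero]

theorem actS_sum_right {ι : Type*} (s : Finset ι) (f : LP n) (w : ι → (Fin n → ℤ) → ℝ) :
    actS f (∑ i ∈ s, w i) = ∑ i ∈ s, actS f (w i) := by
  simp only [actS_eq_shiftAction, map_sum]

def actRowHom (w : (Fin n → ℤ) → Fin q → ℝ) : (Fin q → LP n) →+ ((Fin n → ℤ) → ℝ) where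
  toFun r := actRow r w
  map_zero' := by funext ν; simp [actRow, actS_eq_shiftAction]
  map_add' r s := by funext ν; simp [actRow, actS_eq_shiftAction, Finset.sum_add_distrib]

theorem actRowHom_apply (w : (Fin n → ℤ) → Fin q → ℝ) (r : Fin q → LP n) :
    actRowHom w r = actRow r w := rfl

theorem actRow_add (r s : Fin q → LP n) (w : (Fin n → ℤ) → Fin q → ℝ) :
    actRow (r + s) w = actRow r w + actRow s w :=
  map_add (actRowHom w) r s

theorem actRow_sub (r s : Fin q → LP n) (w : (Fin n → ℤ) → Fin q → ℝ) :
    actRow (r - s) w = actRow r w - actRow s w :=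
  map_sub (actRowHom w) r s

theorem actRow_eq_sum (r : Fin q → LP n) (w : (Fin n → ℤ) → Fin q → ℝ) :
    actRow r w = ∑ j, actS (r j) (fun μ => w μ j) := by
  funext ν; simp [actRow]

theorem actRow_smul (f : LP n) (r : Fin q → LP n) (w : (Fin n → ℤ) → Fin q → ℝ) :
    actRow (f • r) w = actS f (actRow r w) := by
  simp [actRow_eq_sum, actS_sum_right, actS_mul]

theorem actRow_single (i : Fin q) (w : (Fin n → ℤ) → Fin q → ℝ) :
    actRow (Pi.single i 1) w = fun ν => w ν i := by
  funext ν
  rw [actRow, Fintype.sum_eq_single i fun j hj => by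
    rw [Pi.single_eq_of_ne hj, actS_eq_shiftAction, map_zero]; rfl]
  rw [Pi.single_eq_same, actS_one]

theorem actRow_linearCombination {γ : ℕ} (v : Fin γ → LP n) (G : Fin γ → Fin q → LP n)
    (z : (Fin n → ℤ) → Fin q → ℝ) :
    actRow v (fun ν k => actRow (G k) z ν) = actRow (Fintype.linearCombination (LP n) G v) z := by
  rw [Fintype.linearCombination_apply, ← actRowHom_apply z, map_sum]
  simp only [actRowHom_apply, actRow_smul, actRow_eq_sum v]

theorem actRow_actS {γ : ℕ} (f : LP n) (v : Fin γ → LP n) (x : (Fin n → ℤ) → Fin γ → ℝ) :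
    actRow v (fun ν k => actS f (fun μ => x μ k) ν) = actS f (actRow v x) := by
  simp [actRow_eq_sum, actS_sum_right, actS_comm f]

def rowAnnihilator (w : (Fin n → ℤ) → Fin q → ℝ) : Submodule (LP n) (Fin q → LP n) where
  carrier := {r | actRow r w = 0}
  add_mem' {r s} hr hs := by simp_all [actRow_add]
  zero_mem' := map_zero (actRowHom w)
  smul_mem' f r hr := by simp_all [actRow_smul, actS_zero_right]

theorem mem_rowAnnihilator {r : Fin q → LP n} {w : (Fin n → ℤ) → Fin q → ℝ} :
    r ∈ rowAnnihilator w ↔ actRow r w = 0 := Iff.rfl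

end Action

section Monomials

variable {n d : ℕ}

theorem mono_add (μ ν : Fin n → ℤ) : mono (μ + ν) = mono μ * mono ν := by
  simp [mono, AddMonoidAlgebra.single_mul_single]

theorem mono_zero : mono (0 : Fin n → ℤ) = 1 := rfl

theorem mono_neg_mul_self (μ : Fin n → ℤ) : mono (-μ) * mono μ = 1 := by
  rw [← mono_add, neg_add_cancel, mono_zero]

theorem mono_eq_prod_single (ν : Fin n → ℤ) : mono ν = ∏ i, mono (Pi.single i (ν i)) := by
  have h : ∀ μ, mono μ = AddMonoidAlgebra.of ℝ (Fin n → ℤ) (Multiplicative.ofAdd μ) := fun _ => rfl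
  simp only [h, ← map_prod, ← ofAdd_sum, Finset.univ_sum_single]

theorem mono_single_mem {S : Subalgebra ℝ (LP n)} {i : Fin n} (h₁ : mono (Pi.single i 1) ∈ S)
    (hneg : mono (Pi.single i (-1)) ∈ S) (c : ℤ) : mono (Pi.single i c) ∈ S := by
  induction c using Int.induction_on with
  | zero => simp [mono_zero]
  | succ k ih => rw [Pi.single_add, mono_add]; exact S.mul_mem ih h₁
  | pred k ih => rw [sub_eq_add_neg, Pi.single_add, mono_add]; exact S.mul_mem ih hneg

theorem mono_mem_of_single_mem {S : Subalgebra ℝ (LP n)} {ν : Fin n → ℤ}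
    (h : ∀ i, ν i ≠ 0 → mono (Pi.single i 1) ∈ S ∧ mono (Pi.single i (-1)) ∈ S) :
    mono ν ∈ S := by
  rw [mono_eq_prod_single]
  refine prod_mem fun i _ => ?_
  by_cases hi : ν i = 0
  · simp [hi, mono_zero]
  · exact mono_single_mem (h i hi).1 (h i hi).2 _

theorem Subalgebra.eq_top_of_forall_mono_mem {S : Subalgebra ℝ (LP n)} (h : ∀ μ, mono μ ∈ S) :
    S = ⊤ :=
  eq_top_iff.2 fun f _ => AddMonoidAlgebra.induction_on f h (fun _ _ => S.add_mem)
    fun r _ hx => S.smul_mem hx r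

theorem mono_mem_subA {ν : Fin n → ℤ} (hν : ∀ i : Fin n, d ≤ (i : ℕ) → ν i = 0) :
    mono ν ∈ subA n d :=
  Algebra.subset_adjoin ⟨ν, hν, rfl⟩

theorem mono_single_mem_subA {i : Fin n} (hi : (i : ℕ) < d) (c : ℤ) :
    mono (Pi.single i c) ∈ subA n d :=
  mono_mem_subA fun t ht => Pi.single_eq_of_ne (fun h : t = i => by subst h; omega) _

theorem subA_fg (n d : ℕ) : (subA n d).FG := by
  refine Subalgebra.fg_def.2
    ⟨(fun p : Fin n × Bool => mono (Pi.single p.1 (if p.2 then 1 else -1))) '' {p | (p.1 : ℕ) < d},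
      (Set.toFinite _).image _, le_antisymm ?_ ?_⟩
  · rw [Algebra.adjoin_le_iff]
    rintro _ ⟨⟨i, b⟩, hi, rfl⟩
    exact mono_single_mem_subA hi _
  · rw [subA, Algebra.adjoin_le_iff]
    rintro _ ⟨ν, hν, rfl⟩
    refine mono_mem_of_single_mem fun i hi => ?_
    have hid : (i : ℕ) < d := by by_contra h; exact hi (hν i (by omega))
    exact ⟨Algebra.subset_adjoin ⟨(i, true), hid, rfl⟩,
      Algebra.subset_adjoin ⟨(i, false), hid, rfl⟩⟩

instance (n d : ℕ) : IsNoetherianRing (subA n d) :=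
  have := (Subalgebra.fg_iff_finiteType _).mp (subA_fg n d)
  Algebra.FiniteType.isNoetherianRing ℝ _

theorem exists_embIdx_eq {i : Fin n} (hi : d ≤ (i : ℕ)) : ∃ j : Fin (n - d), embIdx d j = i :=
  ⟨⟨i - d, by omega⟩, Fin.ext (by simp [embIdx]; omega)⟩

end Monomials

section StateRepresentation

variable {n q γ : ℕ}

theorem behavior_eq_image (R : Submodule (LP n) (Fin q → LP n)) (g : Fin γ → Fin q → LP n)
    (C : Fin q → Fin γ → LP n)
    (hC : ∀ i, Fintype.linearCombination (LP n) (R.mkQ ∘ g) (C i) = R.mkQ (Pi.single i 1)) :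
    Behavior R = {w | ∃ x, LinearMap.ker (Fintype.linearCombination (LP n) (R.mkQ ∘ g)) ≤
      rowAnnihilator x ∧ w = actMat (Matrix.of C) x} := by
  ext w
  constructor
  · intro hw
    refine ⟨fun ν k => actRow (g k) w ν, fun v hv => ?_, ?_⟩
    · rw [LinearMap.mem_ker, Fintype.linearCombination_linearMap_comp, Submodule.mkQ_apply,
        Submodule.Quotient.mk_eq_zero] at hv
      exact (actRow_linearCombination v g w).trans (hw _ hv)
    · have hCg : ∀ i, Pi.single i 1 - Fintype.linearCombination (LP n) g (C i) ∈ R := fun i => by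
        rw [← Submodule.Quotient.mk_eq_zero, ← Submodule.mkQ_apply, map_sub,
          ← Fintype.linearCombination_linearMap_comp, hC, sub_self]
      funext ν i
      have := hw _ (hCg i)
      rw [actRow_sub, sub_eq_zero, actRow_single, ← actRow_linearCombination] at this
      exact congrFun this ν
  · rintro ⟨x, hx, rfl⟩ r hr
    refine (actRow_linearCombination r C x).trans (hx ?_)
    have hC' : Fintype.linearCombination (LP n) (R.mkQ ∘ g) ∘ C = R.mkQ ∘ fun i => Pi.single i 1 :=
      funext hC
    rw [LinearMap.mem_ker, ← Fintype.linearCombination_linearMap_comp, hC',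
      Fintype.linearCombination_linearMap_comp, Fintype.linearCombination_pi_single,
      Submodule.mkQ_apply, Submodule.Quotient.mk_eq_zero]
    exact hr

end StateRepresentation

section Equivariance

variable {n : ℕ} {M : Type*} [AddCommGroup M] [Module (LP n) M]

def equivariantSubalgebra (E : M →+ ((Fin n → ℤ) → ℝ))
    (hE : ∀ (r : ℝ) y, E (algebraMap ℝ (LP n) r • y) = actS (algebraMap ℝ (LP n) r) (E y)) :
    Subalgebra ℝ (LP n) where
  carrier := {f | ∀ y, E (f • y) = actS f (E y)}
  mul_mem' {f g} hf hg y := by rw [mul_smul, hf, hg, actS_mul]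
  add_mem' {f g} hf hg y := by rw [add_smul, map_add, hf, hg, actS_add]
  algebraMap_mem' r := hE r

variable {E : M →+ ((Fin n → ℤ) → ℝ)}
  {hE : ∀ (r : ℝ) y, E (algebraMap ℝ (LP n) r • y) = actS (algebraMap ℝ (LP n) r) (E y)}

theorem mem_equivariantSubalgebra_of_mul_eq_one {u u' : LP n}
    (hu : u ∈ equivariantSubalgebra E hE) (h : u' * u = 1) : u' ∈ equivariantSubalgebra E hE :=
  fun y => by
    conv_rhs => rw [← one_smul (LP n) y, ← h, mul_comm, mul_smul, hu, ← actS_mul, h, actS_one]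

end Equivariance

section StateMap

variable {n d γ : ℕ} {M : Type*} [AddCommGroup M] [Module (LP n) M] {m : Fin γ → M}
  {x : (Fin n → ℤ) → Fin γ → ℝ}

variable (n d γ) in
def coeRow : (Fin γ → subA n d) →ₗ[subA n d] Fin γ → LP n :=
  LinearMap.compLeft (Algebra.linearMap (subA n d) (LP n)) (Fin γ)

@[simp]
theorem coeRow_apply (c : Fin γ → subA n d) (k : Fin γ) : coeRow n d γ c k = c k := rfl

theorem linearCombination_coeRow (c : Fin γ → subA n d) :
    Fintype.linearCombination (LP n) m (coeRow n d γ c) =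
      Fintype.linearCombination (subA n d) m c :=
  rfl

theorem actRow_coeRow_eq_of_linearCombination_eq
    (hker : ∀ c, Fintype.linearCombination (subA n d) m c = 0 → actRow (coeRow n d γ c) x = 0)
    {c c' : Fin γ → subA n d}
    (h : Fintype.linearCombination (subA n d) m c = Fintype.linearCombination (subA n d) m c') :
    actRow (coeRow n d γ c) x = actRow (coeRow n d γ c') x := by
  have := hker (c - c') (by rw [map_sub, h, sub_self])
  rwa [map_sub, actRow_sub, sub_eq_zero] at this

/-- The map `M → ℝ^{ℤⁿ}`, `Σₖ cₖ mₖ ↦ Σₖ cₖ·xₖ` (`cₖ ∈ A_d`); it is well defined as soon as every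
`A_d`-relation among the `mₖ` annihilates `x`. -/
def stateMap (hm : Function.Surjective (Fintype.linearCombination (subA n d) m))
    (hker : ∀ c, Fintype.linearCombination (subA n d) m c = 0 → actRow (coeRow n d γ c) x = 0) :
    M →+ ((Fin n → ℤ) → ℝ) where
  toFun y := actRow (coeRow n d γ (Function.surjInv hm y)) x
  map_zero' := hker _ (Function.surjInv_eq hm 0)
  map_add' y z := by
    rw [← actRow_add, ← map_add]
    exact actRow_coeRow_eq_of_linearCombination_eq hker
      (by rw [map_add, Function.surjInv_eq hm, Function.surjInv_eq hm, Function.surjInv_eq hm])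

variable {hm : Function.Surjective (Fintype.linearCombination (subA n d) m)}
  {hker : ∀ c, Fintype.linearCombination (subA n d) m c = 0 → actRow (coeRow n d γ c) x = 0}

theorem stateMap_linearCombination (c : Fin γ → subA n d) :
    stateMap hm hker (Fintype.linearCombination (subA n d) m c) = actRow (coeRow n d γ c) x :=
  actRow_coeRow_eq_of_linearCombination_eq hker (Function.surjInv_eq hm _)

theorem stateMap_smul_of_mem_subA (a : subA n d) (y : M) :
    stateMap hm hker ((a : LP n) • y) = actS a (stateMap hm hker y) := by
  obtain ⟨c, rfl⟩ := hm y
  rw [← Subalgebra.smul_def, ← map_smul, stateMap_linearCombination, stateMap_linearCombination,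
    map_smul, Subalgebra.smul_def, actRow_smul]

theorem stateMap_smul_sigmaVar {A : Fin (n - d) → Fin γ → Fin γ → subA n d}
    (hA : ∀ j k, Fintype.linearCombination (subA n d) m (A j k) = sigmaVar d j • m k)
    (hshift : ∀ j, (fun ν => x (ν + Pi.single (embIdx d j) 1)) =
      actMat ((Matrix.of (A j)).map fun a => (a : LP n)) x)
    (j : Fin (n - d)) (y : M) :
    stateMap hm hker (sigmaVar d j • y) = actS (sigmaVar d j) (stateMap hm hker y) := by
  obtain ⟨c, rfl⟩ := hm y
  have hσ : sigmaVar d j • Fintype.linearCombination (subA n d) m c =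
      Fintype.linearCombination (subA n d) m (Fintype.linearCombination (subA n d) (A j) c) := by
    rw [← Fintype.linearCombination_linearMap_comp, Function.comp_def]
    simp only [hA, Fintype.linearCombination_apply, Finset.smul_sum, smul_comm (sigmaVar d j)]
  have hcoe : coeRow n d γ (Fintype.linearCombination (subA n d) (A j) c) =
      Fintype.linearCombination (LP n) (fun k => coeRow n d γ (A j k)) (coeRow n d γ c) := by
    rw [← Fintype.linearCombination_linearMap_comp]
    rfl
  rw [hσ, stateMap_linearCombination, stateMap_linearCombination, hcoe,
    ← actRow_linearCombination, ← actRow_actS]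
  congr 1
  funext ν k
  rw [sigmaVar, actS_mono]
  exact (congrFun (congrFun (hshift j) ν) k).symm

theorem stateMap_generator (k : Fin γ) : stateMap hm hker (m k) = fun ν => x ν k := by
  have hk : Fintype.linearCombination (subA n d) m (Pi.single k 1) = m k := by
    rw [Fintype.linearCombination_apply_single, one_smul]
  have hcoe : coeRow n d γ (Pi.single k 1) = Pi.single k 1 := by
    funext t
    by_cases ht : t = k
    · subst ht; simp
    · simp [Pi.single_eq_of_ne ht]
  rw [← hk, stateMap_linearCombination, hcoe, actRow_single]

theorem stateMap_smul {A : Fin (n - d) → Fin γ → Fin γ → subA n d}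
    (hA : ∀ j k, Fintype.linearCombination (subA n d) m (A j k) = sigmaVar d j • m k)
    (hshift : ∀ j, (fun ν => x (ν + Pi.single (embIdx d j) 1)) =
      actMat ((Matrix.of (A j)).map fun a => (a : LP n)) x)
    (f : LP n) (y : M) :
    stateMap hm hker (f • y) = actS f (stateMap hm hker y) := by
  set S := equivariantSubalgebra (stateMap hm hker) fun r =>
    stateMap_smul_of_mem_subA (algebraMap ℝ (subA n d) r)
  suffices S = ⊤ from (this ▸ Algebra.mem_top : f ∈ S) y
  refine Subalgebra.eq_top_of_forall_mono_mem fun μ => mono_mem_of_single_mem fun i _ => ?_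
  by_cases hi : (i : ℕ) < d
  · exact ⟨stateMap_smul_of_mem_subA ⟨_, mono_single_mem_subA hi 1⟩,
      stateMap_smul_of_mem_subA ⟨_, mono_single_mem_subA hi (-1)⟩⟩
  · obtain ⟨j, rfl⟩ := exists_embIdx_eq (by omega : d ≤ (i : ℕ))
    have hσ : mono (Pi.single (embIdx d j) 1) ∈ S := stateMap_smul_sigmaVar hA hshift j
    refine ⟨hσ, mem_equivariantSubalgebra_of_mul_eq_one hσ ?_⟩
    rw [Pi.single_neg, mono_neg_mul_self]

end StateMap

section FirstOrder

variable {n d γ δ : ℕ} {M : Type*} [AddCommGroup M] [Module (LP n) M] {m : Fin γ → M}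
  {A : Fin (n - d) → Fin γ → Fin γ → subA n d} {x : (Fin n → ℤ) → Fin γ → ℝ}

theorem ker_linearCombination_le_rowAnnihilator
    (hm : Function.Surjective (Fintype.linearCombination (subA n d) m))
    (hker : ∀ c, Fintype.linearCombination (subA n d) m c = 0 → actRow (coeRow n d γ c) x = 0)
    (hA : ∀ j k, Fintype.linearCombination (subA n d) m (A j k) = sigmaVar d j • m k)
    (hshift : ∀ j, (fun ν => x (ν + Pi.single (embIdx d j) 1)) =
      actMat ((Matrix.of (A j)).map fun a => (a : LP n)) x) :
    LinearMap.ker (Fintype.linearCombination (LP n) m) ≤ rowAnnihilator x := by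
  intro v hv
  have : actRow v x = stateMap hm hker (Fintype.linearCombination (LP n) m v) := by
    rw [Fintype.linearCombination_apply, map_sum, actRow_eq_sum]
    simp only [stateMap_smul hA hshift, stateMap_generator]
  exact this.trans ((congrArg _ hv).trans (map_zero _))

theorem ker_linearCombination_le_rowAnnihilator_iff
    (hm : Function.Surjective (Fintype.linearCombination (subA n d) m))
    {X : Fin δ → Fin γ → subA n d}
    (hX : Submodule.span (subA n d) (Set.range X) =
      LinearMap.ker (Fintype.linearCombination (subA n d) m))
    (hA : ∀ j k, Fintype.linearCombination (subA n d) m (A j k) = sigmaVar d j • m k) :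
    LinearMap.ker (Fintype.linearCombination (LP n) m) ≤ rowAnnihilator x ↔
      actMat ((Matrix.of X).map fun a => (a : LP n)) x = 0 ∧
      ∀ j, (fun ν => x (ν + Pi.single (embIdx d j) 1)) =
        actMat ((Matrix.of (A j)).map fun a => (a : LP n)) x := by
  constructor
  · intro h
    refine ⟨funext fun ν => funext fun i => ?_, fun j => funext fun ν => funext fun k => ?_⟩
    · have hXi : coeRow n d γ (X i) ∈ LinearMap.ker (Fintype.linearCombination (LP n) m) := by
        rw [LinearMap.mem_ker, linearCombination_coeRow, ← LinearMap.mem_ker, ← hX]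
        exact Submodule.subset_span ⟨i, rfl⟩
      exact congrFun (h hXi) ν
    · have hrel : sigmaVar d j • Pi.single k 1 - coeRow n d γ (A j k) ∈
          LinearMap.ker (Fintype.linearCombination (LP n) m) := by
        rw [LinearMap.mem_ker, map_sub, map_smul, Fintype.linearCombination_apply_single, one_smul,
          linearCombination_coeRow, hA, sub_self]
      have := mem_rowAnnihilator.1 (h hrel)
      rw [actRow_sub, actRow_smul, actRow_single, sigmaVar, actS_mono, sub_eq_zero] at this
      exact congrFun this ν
  · rintro ⟨hXx, hshift⟩
    refine ker_linearCombination_le_rowAnnihilator hm (fun c hc => ?_) hA hshift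
    have hspan : Submodule.span (subA n d) (Set.range X) ≤
        ((rowAnnihilator x).restrictScalars (subA n d)).comap (coeRow n d γ) := by
      rw [Submodule.span_le]
      rintro _ ⟨i, rfl⟩
      exact funext fun ν => congrFun (congrFun hXx ν) i
    exact hspan (hX ▸ hc)

end FirstOrder

/-- First-order representation theorem for strongly relevant
autonomous systems of order `d`. -/
theorem stmt5 (n d q : ℕ) (R : Submodule (LP n) (Fin q → LP n))
    (hfg : Module.Finite (subA n d) ((Fin q → LP n) ⧸ R)) :
    ∃ γ : ℕ, 0 < γ ∧ ∃ δ : ℕ,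
      ∃ (X : Matrix (Fin δ) (Fin γ) (subA n d))
        (A : Fin (n - d) → Matrix (Fin γ) (Fin γ) (subA n d))
        (C : Matrix (Fin q) (Fin γ) (subA n d)),
        Behavior R =
          {w : (Fin n → ℤ) → Fin q → ℝ |
            ∃ x : (Fin n → ℤ) → Fin γ → ℝ,
              actMat (X.map fun a => (a : LP n)) x = 0 ∧
              (∀ j : Fin (n - d),
                (fun ν => x (ν + Pi.single (embIdx d j) 1)) =
                  actMat ((A j).map fun a => (a : LP n)) x) ∧
              w = actMat (C.map fun a => (a : LP n)) x} := by
  obtain ⟨γ, hγ, m, hm⟩ :=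
    Module.Finite.exists_fin_pos_surjective_linearCombination (subA n d) ((Fin q → LP n) ⧸ R)
  choose g hg using fun k => R.mkQ_surjective (m k)
  obtain ⟨δ, X, hX⟩ := Submodule.fg_iff_exists_fin_generating_family.mp
    (IsNoetherian.noetherian (LinearMap.ker (Fintype.linearCombination (subA n d) m)))
  choose A hA using fun (j : Fin (n - d)) k => hm (sigmaVar d j • m k)
  choose C hC using fun i => hm (R.mkQ (Pi.single i 1))
  have hmg : R.mkQ ∘ g = m := funext hg
  refine ⟨γ, hγ, δ, Matrix.of X, fun j => Matrix.of (A j), Matrix.of C, ?_⟩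
  rw [behavior_eq_image R g (fun i => coeRow n d γ (C i)) (by rw [hmg]; exact hC), hmg]
  simp only [ker_linearCombination_le_rowAnnihilator_iff hm hX hA, and_assoc]
  rfl
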